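/- Fix n ≥ 3 and θ ∈ (0, π/4), and let P be the distribution obtained by all n parties measuring the state |GHZⁿ_θ⟩ = cos θ|0⟩^⊗n − sin θ|1⟩^⊗n with the identical projective measurements m_{0|x} = cos α_x⟨0| + sin α_x⟨1|, m_{1|x} = sin α_x⟨0| − cos α_x⟨1|, where α₀ = arctan(tan(θ)^{−3/(3n−4)}) and α₁ = −arctan(tan(θ)^{−1/(3n−4)}). Then the symmetric Bell expression I_sym = ∑_{i<j} I^{ij}_{0⃗|0⃗} − C(n−1,2)·P(0⃗|0⃗) evaluates to (n−1)·(cos^n(α₀)cos θ − sin^n(α₀)sin θ)² > 0. -/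

import Mathlib

/-!
The angles are chosen so that two families of amplitudes vanish. In tangent form the amplitude
of `P(10 0⃗|10 0⃗)` is proportional to `tan α₁ + tan θ tanⁿ⁻¹ α₀` and that of `P(00 0⃗|11 0⃗)` to
`1 − tan θ tan² α₁ tanⁿ⁻² α₀`; with `tan α₀ = t^(−3/(3n−4))`, `tan α₁ = −t^(−1/(3n−4))`,
`t = tan θ`, both are zero. Every lifted CHSH term then reduces to `P(0⃗|0⃗)`, and
`C(n,2) − C(n−1,2) = n − 1` gives the value of `I_sym`. It is positive because the remaining
amplitude is `cos θ cosⁿ α₀ (1 − tan θ tanⁿ α₀)` and `tan θ tanⁿ α₀ = t^(−4/(3n−4)) > 1`.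
-/

open Finset Real

noncomputable section

/-- The all-zero outcome/input string. -/
def zvec (n : ℕ) : Fin n → Fin 2 := fun _ => 0

/-- The string which is zero except at positions `i` (value `u`) and `j` (value `v`). -/
def upd2 (n : ℕ) (i j : Fin n) (u v : Fin 2) : Fin n → Fin 2 :=
  Function.update (Function.update (zvec n) i u) j v

/-- The lifted CHSH-variant `I^{ij}_{0⃗|0⃗}` on parties `i, j`, all other parties having
input and outcome fixed to `0`. -/
def liftedCHSH (n : ℕ) (P : (Fin n → Fin 2) → (Fin n → Fin 2) → ℝ) (i j : Fin n) : ℝ :=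
  P (upd2 n i j 0 0) (upd2 n i j 0 0) - P (upd2 n i j 1 0) (upd2 n i j 1 0)
    - P (upd2 n i j 0 1) (upd2 n i j 0 1) - P (upd2 n i j 0 0) (upd2 n i j 1 1)

/-- The symmetric Bell expression `I_sym = ∑_{i<j} I^{ij}_{0⃗|0⃗} − C(n−1,2)·P(0⃗|0⃗)`. -/
def Isym (n : ℕ) (P : (Fin n → Fin 2) → (Fin n → Fin 2) → ℝ) : ℝ :=
  (∑ i, ∑ j ∈ univ.filter (fun j => i < j), liftedCHSH n P i j)
    - ((n - 1).choose 2 : ℝ) * P (zvec n) (zvec n)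

/-- The measurement covector coefficients: `m_{0|x} = cos α_x⟨0| + sin α_x⟨1|`,
`m_{1|x} = sin α_x⟨0| − cos α_x⟨1|`, where `α_x = α₀` for input `x = 0` and `α₁` for
input `x = 1`; `meas α₀ α₁ a x b` is the coefficient of `⟨b|` in `m_{a|x}`. -/
def meas (α₀ α₁ : ℝ) (a x b : Fin 2) : ℝ :=
  let α := if x = 0 then α₀ else α₁
  if a = 0 then (if b = 0 then Real.cos α else Real.sin α)
  else (if b = 0 then Real.sin α else -Real.cos α)

/-- The outcome distribution obtained when all `n` parties measure the state
`|GHZⁿ_θ⟩ = cos θ|0⟩^⊗n − sin θ|1⟩^⊗n` with the measurements `meas α₀ α₁`: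
`P(a⃗|x⃗) = |(⊗ᵢ m_{aᵢ|xᵢ})|GHZⁿ_θ⟩|²`. -/
def ghzProb (n : ℕ) (θ α₀ α₁ : ℝ) : (Fin n → Fin 2) → (Fin n → Fin 2) → ℝ := fun a x =>
  (Real.cos θ * ∏ i, meas α₀ α₁ (a i) (x i) 0
    - Real.sin θ * ∏ i, meas α₀ α₁ (a i) (x i) 1) ^ 2


lemma upd2_comm {n : ℕ} {i j : Fin n} (hij : i ≠ j) (u v : Fin 2) :
    upd2 n i j u v = upd2 n j i v u :=
  Function.update_comm hij (β := fun _ => Fin 2) u v _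

lemma upd2_zero_zero (n : ℕ) (i j : Fin n) : upd2 n i j 0 0 = zvec n := by
  ext k; simp [upd2, zvec, Function.update_apply]

lemma prod_upd2 {M : Type*} [CommMonoid M] {n : ℕ} (f : Fin 2 → Fin 2 → M) {i j : Fin n}
    (hij : i ≠ j) (u v p q : Fin 2) :
    ∏ k, f (upd2 n i j u v k) (upd2 n i j p q k) = f u p * f v q * f 0 0 ^ (n - 2) := by
  have hi : i ∈ (univ : Finset (Fin n)) \ {j} := by simpa using hij
  have hcard : #((univ \ {j}) \ {i}) = n - 2 := by
    rw [card_sdiff_of_subset (by simpa using hij), card_sdiff_of_subset (subset_univ _)]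
    simp [Nat.sub_sub]
  simp only [upd2, zvec, Function.apply_update₂ (fun _ => f), prod_update_of_mem (mem_univ j),
    prod_update_of_mem hi, prod_const, hcard]
  ac_rfl

lemma sum_card_Ioi (n : ℕ) : ∑ i : Fin n, #(Ioi i) = n.choose 2 := by
  simp only [Fin.card_Ioi]
  rw [Fin.sum_univ_eq_sum_range (fun i => n - 1 - i), sum_range_reflect (fun i => i) n,
    sum_range_id, Nat.choose_two_right]

lemma Isym_eq_sub_one_mul_of_vanishing {n : ℕ} (hn : 1 ≤ n)
    (P : (Fin n → Fin 2) → (Fin n → Fin 2) → ℝ)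
    (h₁₀ : ∀ i j : Fin n, i ≠ j → P (upd2 n i j 1 0) (upd2 n i j 1 0) = 0)
    (h₁₁ : ∀ i j : Fin n, i ≠ j → P (upd2 n i j 0 0) (upd2 n i j 1 1) = 0) :
    Isym n P = (n - 1) * P (zvec n) (zvec n) := by
  have hpair : ∀ i j : Fin n, i < j → liftedCHSH n P i j = P (zvec n) (zvec n) := by
    intro i j hij
    -- `P(01 0⃗|01 0⃗)` on the pair `(i, j)` is `P(10 0⃗|10 0⃗)` on the pair `(j, i)`
    rw [liftedCHSH, h₁₀ i j hij.ne, upd2_comm hij.ne 0 1, h₁₀ j i hij.ne', h₁₁ i j hij.ne,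
      upd2_zero_zero]
    ring
  rw [Isym, sum_congr rfl fun i _ => sum_congr rfl fun j hj => hpair i j (mem_filter.1 hj).2]
  simp only [sum_const, nsmul_eq_mul, ← sum_mul, ← Nat.cast_sum, filter_lt_eq_Ioi, sum_card_Ioi]
  obtain ⟨m, rfl⟩ := Nat.exists_eq_add_of_le' hn
  rw [Nat.add_sub_cancel, Nat.choose_succ_succ', Nat.choose_one_right]
  push_cast
  ring

lemma ghzProb_zvec (n : ℕ) (θ α₀ α₁ : ℝ) :
    ghzProb n θ α₀ α₁ (zvec n) (zvec n) = (cos θ * cos α₀ ^ n - sin θ * sin α₀ ^ n) ^ 2 := by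
  simp [ghzProb, zvec, meas]

lemma ghzProb_upd2 {n : ℕ} (θ α₀ α₁ : ℝ) {i j : Fin n} (hij : i ≠ j) (u v p q : Fin 2) :
    ghzProb n θ α₀ α₁ (upd2 n i j u v) (upd2 n i j p q) =
      (cos θ * (meas α₀ α₁ u p 0 * meas α₀ α₁ v q 0 * cos α₀ ^ (n - 2))
        - sin θ * (meas α₀ α₁ u p 1 * meas α₀ α₁ v q 1 * sin α₀ ^ (n - 2))) ^ 2 := by
  simp only [ghzProb, prod_upd2 (fun a x => meas α₀ α₁ a x 0) hij,
    prod_upd2 (fun a x => meas α₀ α₁ a x 1) hij]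
  simp [meas]

section Amplitudes

variable {n : ℕ} {θ α₀ α₁ : ℝ} (hcθ : cos θ ≠ 0) (hc₀ : cos α₀ ≠ 0) (hc₁ : cos α₁ ≠ 0)
include hcθ hc₀ hc₁

lemma ghzProb_upd2_one_zero_eq_zero (h : tan θ * tan α₀ ^ (n - 1) = -tan α₁) {i j : Fin n}
    (hij : i ≠ j) : ghzProb n θ α₀ α₁ (upd2 n i j 1 0) (upd2 n i j 1 0) = 0 := by
  obtain ⟨m, rfl⟩ : ∃ m, n = m + 2 := ⟨n - 2, by have := Fin.val_ne_of_ne hij; omega⟩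
  rw [show m + 2 - 1 = m + 1 by omega] at h
  rw [ghzProb_upd2 θ α₀ α₁ hij]
  simp only [meas, Nat.add_sub_cancel]
  norm_num
  rw [← tan_mul_cos hcθ, ← tan_mul_cos hc₀, ← tan_mul_cos hc₁]
  linear_combination cos θ * cos α₁ * cos α₀ ^ (m + 1) * h

lemma ghzProb_upd2_zero_zero_upd2_one_one_eq_zero
    (h : tan θ * tan α₁ ^ 2 * tan α₀ ^ (n - 2) = 1) {i j : Fin n} (hij : i ≠ j) :
    ghzProb n θ α₀ α₁ (upd2 n i j 0 0) (upd2 n i j 1 1) = 0 := by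
  rw [ghzProb_upd2 θ α₀ α₁ hij]
  simp only [meas]
  norm_num
  rw [← tan_mul_cos hcθ, ← tan_mul_cos hc₀, ← tan_mul_cos hc₁]
  linear_combination (-(cos θ * cos α₁ ^ 2 * cos α₀ ^ (n - 2))) * h

end Amplitudes

lemma cos_pow_mul_cos_sub_sin_pow_mul_sin_ne_zero {n : ℕ} {θ α : ℝ} (hcθ : cos θ ≠ 0)
    (hc : cos α ≠ 0) (h : tan θ * tan α ^ n ≠ 1) : cos α ^ n * cos θ - sin α ^ n * sin θ ≠ 0 := by
  rw [← tan_mul_cos hcθ, ← tan_mul_cos hc,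
    show cos α ^ n * cos θ - (tan α * cos α) ^ n * (tan θ * cos θ)
      = cos α ^ n * cos θ * (1 - tan θ * tan α ^ n) by ring]
  exact mul_ne_zero (mul_ne_zero (pow_ne_zero _ hc) hcθ) (sub_ne_zero.2 h.symm)

lemma three_mul_sub_four_ne_zero (n : ℕ) : 3 * (n : ℝ) - 4 ≠ 0 := by
  intro h
  have : ((3 * n : ℕ) : ℝ) = 4 := by push_cast; linarith
  norm_cast at this
  omega

section Exponents

variable {t : ℝ} (ht : 0 < t) {n : ℕ}
include ht

lemma mul_rpow_pow (e : ℝ) (k : ℕ) : t * (t ^ e) ^ k = t ^ (1 + e * k) := by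
  rw [← rpow_mul_natCast ht.le, rpow_add ht, rpow_one]

lemma mul_rpow_pow_sub_one (hn : 1 ≤ n) :
    t * (t ^ (-(3 : ℝ) / (3 * (n : ℝ) - 4))) ^ (n - 1) = t ^ (-(1 : ℝ) / (3 * (n : ℝ) - 4)) := by
  rw [mul_rpow_pow ht, Nat.cast_sub hn]
  congr 1
  field_simp [three_mul_sub_four_ne_zero n]
  ring

lemma mul_rpow_sq_mul_rpow_pow_sub_two (hn : 2 ≤ n) :
    t * (t ^ (-(1 : ℝ) / (3 * (n : ℝ) - 4))) ^ 2 * (t ^ (-(3 : ℝ) / (3 * (n : ℝ) - 4))) ^ (n - 2)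
      = 1 := by
  rw [mul_rpow_pow ht, ← rpow_mul_natCast ht.le, ← rpow_add ht, Nat.cast_sub hn]
  convert rpow_zero t using 2
  field_simp [three_mul_sub_four_ne_zero n]
  ring

lemma one_lt_mul_rpow_pow (ht₁ : t < 1) (hn : 2 ≤ n) :
    1 < t * (t ^ (-(3 : ℝ) / (3 * (n : ℝ) - 4))) ^ n := by
  have hD : 0 < 3 * (n : ℝ) - 4 := by
    have : (2 : ℝ) ≤ n := by exact_mod_cast hn
    linarith
  rw [mul_rpow_pow ht]
  refine one_lt_rpow_of_pos_of_lt_one_of_neg ht ht₁ ?_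
  rw [show 1 + -3 / (3 * (n : ℝ) - 4) * n = -4 / (3 * (n : ℝ) - 4) by field_simp; ring]
  exact div_neg_of_neg_of_pos (by norm_num) hD

end Exponents

/-- for `n ≥ 3`, `θ ∈ (0,π/4)` and the angles
`α₀ = arctan(tan θ ^ (−3/(3n−4)))`, `α₁ = −arctan(tan θ ^ (−1/(3n−4)))`, the symmetric
Bell expression on the GHZ distribution evaluates to
`(n−1)(cosⁿα₀ cos θ − sinⁿα₀ sin θ)² > 0`. -/
theorem stmt12 (n : ℕ) (hn : 3 ≤ n) (θ : ℝ) (hθ : θ ∈ Set.Ioo 0 (π / 4))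
    (α₀ α₁ : ℝ)
    (hα₀ : α₀ = arctan (tan θ ^ (-(3 : ℝ) / (3 * (n : ℝ) - 4))))
    (hα₁ : α₁ = -arctan (tan θ ^ (-(1 : ℝ) / (3 * (n : ℝ) - 4)))) :
    Isym n (ghzProb n θ α₀ α₁)
      = ((n : ℝ) - 1) * (Real.cos α₀ ^ n * Real.cos θ - Real.sin α₀ ^ n * Real.sin θ) ^ 2 ∧
    0 < Isym n (ghzProb n θ α₀ α₁) := by
  obtain ⟨hθ₀, hθ₄⟩ := hθ
  have hcθ : cos θ ≠ 0 := (cos_pos_of_mem_Ioo ⟨by linarith [pi_pos], by linarith⟩).ne'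
  have ht : 0 < tan θ := tan_pos_of_pos_of_lt_pi_div_two hθ₀ (by linarith)
  have ht₁ : tan θ < 1 :=
    tan_pi_div_four ▸ tan_lt_tan_of_nonneg_of_lt_pi_div_two hθ₀.le (by linarith) hθ₄
  have hc₀ : cos α₀ ≠ 0 := hα₀ ▸ (cos_arctan_pos _).ne'
  have hc₁ : cos α₁ ≠ 0 := by rw [hα₁, cos_neg]; exact (cos_arctan_pos _).ne'
  have htan₀ : tan α₀ = tan θ ^ (-(3 : ℝ) / (3 * (n : ℝ) - 4)) := by rw [hα₀, tan_arctan]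
  have htan₁ : tan α₁ = -tan θ ^ (-(1 : ℝ) / (3 * (n : ℝ) - 4)) := by
    rw [hα₁, tan_neg, tan_arctan]
  have hIsym : Isym n (ghzProb n θ α₀ α₁)
      = ((n : ℝ) - 1) * (cos α₀ ^ n * cos θ - sin α₀ ^ n * sin θ) ^ 2 := by
    rw [Isym_eq_sub_one_mul_of_vanishing (by omega) _
      (fun i j => ghzProb_upd2_one_zero_eq_zero hcθ hc₀ hc₁
        (by rw [htan₀, htan₁, neg_neg]; exact mul_rpow_pow_sub_one ht (by omega)))
      (fun i j => ghzProb_upd2_zero_zero_upd2_one_one_eq_zero hcθ hc₀ hc₁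
        (by rw [htan₀, htan₁, neg_sq]; exact mul_rpow_sq_mul_rpow_pow_sub_two ht (by omega))),
      ghzProb_zvec]
    ring
  have hamp : cos α₀ ^ n * cos θ - sin α₀ ^ n * sin θ ≠ 0 :=
    cos_pow_mul_cos_sub_sin_pow_mul_sin_ne_zero hcθ hc₀
      (htan₀ ▸ (one_lt_mul_rpow_pow ht ht₁ (by omega)).ne')
  have hn₁ : (0 : ℝ) < n - 1 := by
    have : (3 : ℝ) ≤ n := by exact_mod_cast hn
    linarith
  exact ⟨hIsym, hIsym ▸ mul_pos hn₁ (sq_pos_of_ne_zero hamp)⟩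

end
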